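/- Let x be a strictly positive sequence-form strategy and z ∈ R^Σ any vector. Then the squared local dual norm of z at x with respect to the dilated entropy DGF satisfies ‖z‖_{*,x}² = Σ_{j∈J} Σ_{a∈A_j} (u_{ja}ᵀ (z ∘ x))² / (w_j x_{ja}). -/

import Mathlib

inductive TFT : Type where
  | term : TFT
  | dec : (n : ℕ) → (Fin n → TFT) → TFT
  | obs : (n : ℕ) → (Fin n → TFT) → TFT

namespace TFT

noncomputable def wt : TFT → ℝ
  | term => 0
  | dec _ c => 2 + 2 * (List.ofFn fun i => wt (c i)).foldr max 0
  | obs _ c => ∑ i, wt (c i)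

def Seq : TFT → Type
  | term => Empty
  | dec n c => Σ i : Fin n, Option (Seq (c i))
  | obs n c => Σ i : Fin n, Seq (c i)

instance seqFintype : (t : TFT) → Fintype (Seq t)
  | term => inferInstanceAs (Fintype Empty)
  | dec n c => by
      letI := fun i => seqFintype (c i)
      exact inferInstanceAs (Fintype (Σ i : Fin n, Option (Seq (c i))))
  | obs n c => by
      letI := fun i => seqFintype (c i)
      exact inferInstanceAs (Fintype (Σ i : Fin n, Seq (c i)))

instance seqDecEq : (t : TFT) → DecidableEq (Seq t)
  | term => inferInstanceAs (DecidableEq Empty)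
  | dec n c => by
      letI := fun i => seqDecEq (c i)
      exact inferInstanceAs (DecidableEq (Σ i : Fin n, Option (Seq (c i))))
  | obs n c => by
      letI := fun i => seqDecEq (c i)
      exact inferInstanceAs (DecidableEq (Σ i : Fin n, Seq (c i)))

def IsSF : (t : TFT) → (Seq t → ℝ) → ℝ → Prop
  | term, _, _ => True
  | dec _ c, x, par =>
      (∑ i, x ⟨i, none⟩) = par ∧
      ∀ i, IsSF (c i) (fun s => x ⟨i, some s⟩) (x ⟨i, none⟩)
  | obs _ c, x, par => ∀ i, IsSF (c i) (fun s => x ⟨i, s⟩) par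

noncomputable def decW : (t : TFT) → Seq t → ℝ
  | term => fun s => Empty.elim s
  | dec n c => fun σ => match σ with
      | ⟨_, none⟩ => wt (dec n c)
      | ⟨i, some s⟩ => decW (c i) s
  | obs _ c => fun σ => decW (c σ.1) σ.2

noncomputable def succW : (t : TFT) → Seq t → ℝ
  | term => fun s => Empty.elim s
  | dec _ c => fun σ => match σ with
      | ⟨i, none⟩ => wt (c i)
      | ⟨i, some s⟩ => succW (c i) s
  | obs _ c => fun σ => succW (c σ.1) σ.2

def parent : (t : TFT) → Seq t → Option (Seq t)
  | term => fun s => Empty.elim s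
  | dec _ c => fun σ => match σ with
      | ⟨_, none⟩ => none
      | ⟨i, some s⟩ =>
          some (match parent (c i) s with
            | none => ⟨i, none⟩
            | some q => ⟨i, some q⟩)
  | obs _ c => fun σ => (parent (c σ.1) σ.2).map fun q => ⟨σ.1, q⟩

noncomputable def u : (t : TFT) → Seq t → Seq t → ℝ
  | term => fun s => Empty.elim s
  | dec _ c => fun σ σ' => match σ, σ' with
      | ⟨i, none⟩, ⟨i', _⟩ => if i' = i then 1 else 0
      | ⟨_, some _⟩, ⟨_, none⟩ => 0
      | ⟨i, some s⟩, ⟨i', some s'⟩ => if h : i' = i then u (c i) s (h ▸ s') else 0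
  | obs _ c => fun σ σ' =>
      if h : σ'.1 = σ.1 then u (c σ.1) σ.2 (h ▸ σ'.2) else 0

/-- The Hessian of the dilated entropy DGF at a strictly positive sequence-form
strategy `x`, given entrywise. -/
noncomputable def hess (t : TFT) (x : Seq t → ℝ) : Matrix (Seq t) (Seq t) ℝ :=
  fun σ σ' =>
    if σ' = σ then (decW t σ + succW t σ) / x σ
    else if parent t σ' = some σ then -(decW t σ') / x σ
    else if parent t σ = some σ' then -(decW t σ) / x σ'
    else 0

/-- The dilated entropy distance-generating function. -/
noncomputable def psi : (t : TFT) → (Seq t → ℝ) → ℝ → ℝ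
  | term, _, _ => 0
  | dec n c, x, par =>
      wt (dec n c) *
          (par * Real.log n + ∑ i, x ⟨i, none⟩ * Real.log (x ⟨i, none⟩ / par)) +
        ∑ i, psi (c i) (fun s => x ⟨i, some s⟩) (x ⟨i, none⟩)
  | obs _ c, x, par => ∑ i, psi (c i) (fun s => x ⟨i, s⟩) par

/-- The strategy that randomizes uniformly at every decision point. -/
def IsUniform : (t : TFT) → (Seq t → ℝ) → ℝ → Prop
  | term, _, _ => True
  | dec n c, x, par =>
      (∀ i : Fin n, x ⟨i, none⟩ = par / n) ∧
      ∀ i, IsUniform (c i) (fun s => x ⟨i, some s⟩) (x ⟨i, none⟩)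
  | obs _ c, x, par => ∀ i, IsUniform (c i) (fun s => x ⟨i, s⟩) par

end TFT

/-!
A sequence lies in the subtree of `τ` iff it is `τ` or its parent does, so the subtree-indicator
matrix `U = (u τ σ)` satisfies `U (1 - C) = 1`, where `C ρ σ = 1` iff `ρ` is the parent of `σ`.
The sequence-form constraints say that the weights `w_j x_{ja}` of the children of `σ` add up to
`succW σ * x σ`; this is exactly what makes the Hessian the congruence `Kᵀ D K` of
`D = diag (w_j x_{ja})` by `K = (1 - C)ᵀ X⁻¹`. Since `K (X Uᵀ) = 1`, its inverse is
`(X Uᵀ) D⁻¹ (X Uᵀ)ᵀ`, the dyadic expansion, and the quadratic form can be read off.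
-/

namespace Matrix

theorem diagonal_mul_diagonal_inv {n 𝕜 : Type*} [Fintype n] [DecidableEq n] [Field 𝕜]
    {d : n → 𝕜} (hd : ∀ i, d i ≠ 0) : diagonal d * diagonal d⁻¹ = 1 := by
  rw [diagonal_mul_diagonal, ← diagonal_one]
  exact congrArg diagonal (funext fun i => mul_inv_cancel₀ (hd i))

theorem dotProduct_inv_transpose_mul_diagonal_mul_mulVec {n 𝕜 : Type*} [Fintype n]
    [DecidableEq n] [Field 𝕜] {K R : Matrix n n 𝕜} (hKR : K * R = 1) {d : n → 𝕜}
    (hd : ∀ i, d i ≠ 0) (z : n → 𝕜) :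
    z ⬝ᵥ (Kᵀ * diagonal d * K)⁻¹ *ᵥ z = ∑ i, (Rᵀ *ᵥ z) i ^ 2 / d i := by
  have hRK : R * K = 1 := mul_eq_one_comm.mp hKR
  have hinv : (Kᵀ * diagonal d * K)⁻¹ = R * diagonal d⁻¹ * Rᵀ := by
    refine inv_eq_right_inv ?_
    calc Kᵀ * diagonal d * K * (R * diagonal d⁻¹ * Rᵀ)
        = Kᵀ * (diagonal d * (K * R) * diagonal d⁻¹) * Rᵀ := by simp only [Matrix.mul_assoc]
      _ = (R * K)ᵀ := by
        rw [hKR, Matrix.mul_one, diagonal_mul_diagonal_inv hd, Matrix.mul_one, transpose_mul]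
      _ = 1 := by rw [hRK, transpose_one]
  rw [hinv, ← mulVec_mulVec, ← mulVec_mulVec, dotProduct_mulVec, ← mulVec_transpose, dotProduct]
  refine Finset.sum_congr rfl fun i _ => ?_
  rw [mulVec_diagonal, Pi.inv_apply]
  ring

end Matrix

namespace TFT

section Constructors

variable {n : ℕ} {c : Fin n → TFT}

theorem sum_seq_dec (f : Seq (dec n c) → ℝ) :
    ∑ σ, f σ = ∑ i, (f ⟨i, none⟩ + ∑ s, f ⟨i, some s⟩) := by
  have h (g : (Σ i : Fin n, Option (Seq (c i))) → ℝ) :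
      ∑ σ, g σ = ∑ i, (g ⟨i, none⟩ + ∑ s, g ⟨i, some s⟩) := by
    simp only [Fintype.sum_sigma, Fintype.sum_option]
  exact h f

theorem sum_seq_obs (f : Seq (obs n c) → ℝ) : ∑ σ, f σ = ∑ i, ∑ s, f ⟨i, s⟩ := by
  have h (g : (Σ i : Fin n, Seq (c i)) → ℝ) : ∑ σ, g σ = ∑ i, ∑ s, g ⟨i, s⟩ :=
    Fintype.sum_sigma g
  exact h f

-- Stated at the type `Seq _` rather than at the `Sigma` type it unfolds to: only then do these
-- lemmas rewrite in goals, where the constructors appear as arguments of `parent`, `u`, ... .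
theorem dec_mk_inj_iff {i : Fin n} {o o' : Option (Seq (c i))} :
    @Eq (Seq (dec n c)) ⟨i, o⟩ ⟨i, o'⟩ ↔ o = o' :=
  Sigma.mk.inj_iff.trans (by simp)

theorem obs_mk_inj_iff {i : Fin n} {s s' : Seq (c i)} :
    @Eq (Seq (obs n c)) ⟨i, s⟩ ⟨i, s'⟩ ↔ s = s' :=
  Sigma.mk.inj_iff.trans (by simp)

theorem parent_dec_none (i : Fin n) : parent (dec n c) ⟨i, none⟩ = none := by
  simp only [parent]

theorem parent_dec_some (i : Fin n) (s : Seq (c i)) :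
    parent (dec n c) ⟨i, some s⟩ = some ⟨i, parent (c i) s⟩ := by
  simp only [parent]
  cases parent (c i) s <;> rfl

theorem parent_obs_of_none {i : Fin n} {s : Seq (c i)} (h : parent (c i) s = none) :
    parent (obs n c) ⟨i, s⟩ = none := by
  simp only [parent, h]
  rfl

theorem parent_obs_of_some {i : Fin n} {s q : Seq (c i)} (h : parent (c i) s = some q) :
    parent (obs n c) ⟨i, s⟩ = some ⟨i, q⟩ := by
  simp only [parent, h]
  rfl

theorem u_dec_none (k i : Fin n) (o : Option (Seq (c i))) :
    u (dec n c) ⟨k, none⟩ ⟨i, o⟩ = if i = k then 1 else 0 := by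
  simp only [u]

theorem u_dec_some_none (k i : Fin n) (r : Seq (c k)) :
    u (dec n c) ⟨k, some r⟩ ⟨i, none⟩ = 0 := by
  simp only [u]

theorem u_dec_some_some (k : Fin n) (r s : Seq (c k)) :
    u (dec n c) ⟨k, some r⟩ ⟨k, some s⟩ = u (c k) r s := by
  simp [u]

theorem u_dec_some_of_ne {k i : Fin n} (h : i ≠ k) (r : Seq (c k)) (o : Option (Seq (c i))) :
    u (dec n c) ⟨k, some r⟩ ⟨i, o⟩ = 0 := by
  cases o <;> simp [u, h]

theorem u_obs_same (k : Fin n) (r s : Seq (c k)) : u (obs n c) ⟨k, r⟩ ⟨k, s⟩ = u (c k) r s := by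
  simp [u]

theorem u_obs_of_ne {k i : Fin n} (h : i ≠ k) (r : Seq (c k)) (s : Seq (c i)) :
    u (obs n c) ⟨k, r⟩ ⟨i, s⟩ = 0 := by
  simp [u, h]

theorem decW_dec_none (i : Fin n) : decW (dec n c) ⟨i, none⟩ = wt (dec n c) := by
  simp only [decW]

theorem decW_dec_some (i : Fin n) (s : Seq (c i)) : decW (dec n c) ⟨i, some s⟩ = decW (c i) s := by
  simp only [decW]

theorem decW_obs (i : Fin n) (s : Seq (c i)) : decW (obs n c) ⟨i, s⟩ = decW (c i) s := by
  simp only [decW]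

theorem succW_dec_none (i : Fin n) : succW (dec n c) ⟨i, none⟩ = wt (c i) := by
  simp only [succW]

theorem succW_dec_some (i : Fin n) (s : Seq (c i)) :
    succW (dec n c) ⟨i, some s⟩ = succW (c i) s := by
  simp only [succW]

theorem succW_obs (i : Fin n) (s : Seq (c i)) : succW (obs n c) ⟨i, s⟩ = succW (c i) s := by
  simp only [succW]

theorem dec_mk_ne_of_ne {i k : Fin n} {o : Option (Seq (c i))} {o' : Option (Seq (c k))}
    (h : i ≠ k) : @Ne (Seq (dec n c)) ⟨i, o⟩ ⟨k, o'⟩ :=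
  fun e => h (congrArg Sigma.fst e)

theorem obs_mk_ne_of_ne {i k : Fin n} {s : Seq (c i)} {s' : Seq (c k)} (h : i ≠ k) :
    @Ne (Seq (obs n c)) ⟨i, s⟩ ⟨k, s'⟩ :=
  fun e => h (congrArg Sigma.fst e)

theorem dec_some_ne_none {i k : Fin n} {s : Seq (c i)} :
    @Ne (Seq (dec n c)) ⟨i, some s⟩ ⟨k, none⟩ := nofun

theorem wt_dec_pos : 0 < wt (dec n c) := by
  have h : ∀ l : List ℝ, 0 ≤ l.foldr max 0 := fun l => by
    induction l with
    | nil => exact le_rfl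
    | cons a l ih => exact ih.trans (le_max_right _ _)
  rw [wt]
  linarith [h (List.ofFn fun i => wt (c i))]

end Constructors

theorem decW_pos : ∀ (t : TFT) (σ : Seq t), 0 < decW t σ
  | term, σ => σ.elim
  | dec _ c, ⟨i, none⟩ => by rw [decW_dec_none]; exact wt_dec_pos
  | dec _ c, ⟨i, some s⟩ => by rw [decW_dec_some]; exact decW_pos (c i) s
  | obs _ c, ⟨i, s⟩ => by rw [decW_obs]; exact decW_pos (c i) s

theorem u_self : ∀ (t : TFT) (σ : Seq t), u t σ σ = 1
  | term, σ => σ.elim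
  | dec _ _, ⟨i, none⟩ => by rw [u_dec_none, if_pos rfl]
  | dec _ c, ⟨i, some s⟩ => by rw [u_dec_some_some, u_self (c i) s]
  | obs _ c, ⟨i, s⟩ => by rw [u_obs_same, u_self (c i) s]

theorem u_of_parent_eq_none : ∀ {t : TFT} {σ : Seq t}, parent t σ = none →
    ∀ τ, u t τ σ = if σ = τ then 1 else 0
  | term, σ, _, _ => σ.elim
  | dec _ _, ⟨i, none⟩, _, ⟨k, none⟩ => by
    rcases eq_or_ne i k with rfl | hik
    · exact (u_dec_none i i none).trans (if_pos rfl) |>.trans (if_pos rfl).symm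
    · exact (u_dec_none k i none).trans (if_neg hik) |>.trans (if_neg (dec_mk_ne_of_ne hik)).symm
  | dec _ _, ⟨i, none⟩, _, ⟨k, some r⟩ =>
    (u_dec_some_none k i r).trans (if_neg dec_some_ne_none.symm).symm
  | dec _ _, ⟨i, some s⟩, h, _ => by rw [parent_dec_some] at h; exact nomatch h
  | obs _ c, ⟨i, s⟩, h, ⟨k, r⟩ => by
    cases hs : parent (c i) s with
    | none =>
      rcases eq_or_ne i k with rfl | hik
      · rw [u_obs_same, u_of_parent_eq_none hs r]
        simp only [obs_mk_inj_iff]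
      · exact (u_obs_of_ne hik r s).trans (if_neg (obs_mk_ne_of_ne hik)).symm
    | some q => rw [parent_obs_of_some hs] at h; exact nomatch h

theorem u_of_parent_eq_some : ∀ {t : TFT} {σ ρ : Seq t}, parent t σ = some ρ →
    ∀ τ, u t τ σ = (if σ = τ then 1 else 0) + u t τ ρ
  | term, σ, _, _, _ => σ.elim
  | dec _ _, ⟨i, none⟩, _, h, _ => by rw [parent_dec_none] at h; exact nomatch h
  | dec _ c, ⟨i, some s⟩, ρ, h, ⟨k, ok⟩ => by
    obtain rfl := Option.some_inj.mp (h.symm.trans (parent_dec_some i s))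
    rcases ok with _ | r
    · rw [u_dec_none, u_dec_none, if_neg dec_some_ne_none, zero_add]
    rcases eq_or_ne i k with rfl | hik
    · rw [u_dec_some_some]
      simp only [dec_mk_inj_iff, Option.some_inj]
      cases hs : parent (c i) s with
      | none => rw [u_of_parent_eq_none hs r, u_dec_some_none, add_zero]
      | some q => rw [u_of_parent_eq_some hs r, u_dec_some_some]
    · rw [u_dec_some_of_ne hik, u_dec_some_of_ne hik, if_neg (dec_mk_ne_of_ne hik), zero_add]
  | obs _ c, ⟨i, s⟩, ρ, h, ⟨k, r⟩ => by
    cases hs : parent (c i) s with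
    | none => rw [parent_obs_of_none hs] at h; exact nomatch h
    | some q =>
      obtain rfl := Option.some_inj.mp (h.symm.trans (parent_obs_of_some hs))
      rcases eq_or_ne i k with rfl | hik
      · rw [u_obs_same, u_obs_same, u_of_parent_eq_some hs r]
        simp only [obs_mk_inj_iff]
      · rw [u_obs_of_ne hik, u_obs_of_ne hik, if_neg (obs_mk_ne_of_ne hik), zero_add]

theorem u_eq_zero_of_parent_eq {t : TFT} {σ ρ : Seq t} (h : parent t σ = some ρ) :
    u t σ ρ = 0 := by
  have := u_of_parent_eq_some h σ
  rwa [u_self, if_pos rfl, left_eq_add] at this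

theorem parent_ne_self {t : TFT} (σ : Seq t) : parent t σ ≠ some σ := fun h => by
  simpa [u_self] using u_eq_zero_of_parent_eq h

theorem parent_ne_of_parent_eq {t : TFT} {σ ρ : Seq t} (h : parent t σ = some ρ) :
    parent t ρ ≠ some σ := fun h' => by
  have hσρ : σ ≠ ρ := fun e => parent_ne_self σ (e ▸ h)
  have := u_of_parent_eq_some h ρ
  rw [u_eq_zero_of_parent_eq h', if_neg hσρ, u_self] at this
  exact zero_ne_one (this.trans (zero_add 1))

section Reindex

variable {n : ℕ} {c : Fin n → TFT} (g : Seq (dec n c) → ℝ) (f : Seq (obs n c) → ℝ)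

theorem sum_ite_parent_dec_eq_none :
    ∑ τ, (if parent (dec n c) τ = none then g τ else 0) = ∑ i, g ⟨i, none⟩ := by
  rw [sum_seq_dec]
  refine Finset.sum_congr rfl fun i _ => ?_
  rw [if_pos (parent_dec_none i), add_eq_left]
  exact Finset.sum_eq_zero fun s _ => by rw [parent_dec_some, if_neg nofun]

theorem sum_ite_parent_dec_eq_some (k : Fin n) (o : Option (Seq (c k))) :
    ∑ τ, (if parent (dec n c) τ = some ⟨k, o⟩ then g τ else 0)
      = ∑ s, if parent (c k) s = o then g ⟨k, some s⟩ else 0 := by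
  rw [sum_seq_dec, Finset.sum_eq_single_of_mem k (Finset.mem_univ k), parent_dec_none,
    if_neg nofun, zero_add]
  · refine Finset.sum_congr rfl fun s _ => ?_
    rw [parent_dec_some]
    by_cases hs : parent (c k) s = o
    · rw [if_pos hs, if_pos (by rw [hs])]
    · rw [if_neg hs, if_neg fun e => hs (dec_mk_inj_iff.mp (Option.some_inj.mp e))]
  · intro i _ hik
    rw [parent_dec_none, if_neg nofun, zero_add]
    refine Finset.sum_eq_zero fun s _ => ?_
    rw [parent_dec_some, if_neg fun e => dec_mk_ne_of_ne hik (Option.some_inj.mp e)]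

theorem sum_ite_parent_obs_eq_none :
    ∑ τ, (if parent (obs n c) τ = none then f τ else 0)
      = ∑ i, ∑ s, if parent (c i) s = none then f ⟨i, s⟩ else 0 := by
  rw [sum_seq_obs]
  refine Finset.sum_congr rfl fun i _ => Finset.sum_congr rfl fun s _ => ?_
  cases hs : parent (c i) s with
  | none => rw [parent_obs_of_none hs, if_pos rfl, if_pos rfl]
  | some q => rw [parent_obs_of_some hs, if_neg nofun, if_neg nofun]

theorem sum_ite_parent_obs_eq_some (k : Fin n) (q : Seq (c k)) :
    ∑ τ, (if parent (obs n c) τ = some ⟨k, q⟩ then f τ else 0)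
      = ∑ s, if parent (c k) s = some q then f ⟨k, s⟩ else 0 := by
  rw [sum_seq_obs, Finset.sum_eq_single_of_mem k (Finset.mem_univ k)]
  · refine Finset.sum_congr rfl fun s _ => ?_
    cases hs : parent (c k) s with
    | none => rw [parent_obs_of_none hs, if_neg nofun, if_neg nofun]
    | some q' =>
      rw [parent_obs_of_some hs]
      rcases eq_or_ne q' q with rfl | hq
      · rw [if_pos rfl, if_pos rfl]
      · rw [if_neg fun e => hq (obs_mk_inj_iff.mp (Option.some_inj.mp e)),
          if_neg fun e => hq (Option.some_inj.mp e)]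
  · intro i _ hik
    refine Finset.sum_eq_zero fun s _ => ?_
    cases hs : parent (c i) s with
    | none => rw [parent_obs_of_none hs, if_neg nofun]
    | some q' =>
      rw [parent_obs_of_some hs, if_neg fun e => obs_mk_ne_of_ne hik (Option.some_inj.mp e)]

end Reindex

theorem sum_ite_parent_eq_none_decW_mul : ∀ {t : TFT} {x : Seq t → ℝ} {p : ℝ}, IsSF t x p →
    ∑ τ, (if parent t τ = none then decW t τ * x τ else 0) = wt t * p
  | term, _, _, _ => by
    rw [wt, zero_mul]
    exact Finset.sum_eq_zero fun τ _ => τ.elim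
  | dec _ c, x, p, hsf => by
    rw [sum_ite_parent_dec_eq_none, ← hsf.1, Finset.mul_sum]
    exact Finset.sum_congr rfl fun i _ => by rw [decW_dec_none]
  | obs _ c, x, p, hsf => by
    rw [sum_ite_parent_obs_eq_none, wt, Finset.sum_mul]
    refine Finset.sum_congr rfl fun i _ => ?_
    rw [← sum_ite_parent_eq_none_decW_mul (hsf i)]
    exact Finset.sum_congr rfl fun s _ => by rw [decW_obs]

theorem sum_ite_parent_eq_some_decW_mul : ∀ {t : TFT} {x : Seq t → ℝ} {p : ℝ}, IsSF t x p →
    ∀ σ, ∑ τ, (if parent t τ = some σ then decW t τ * x τ else 0) = succW t σ * x σ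
  | term, _, _, _, σ => σ.elim
  | dec _ c, x, _, hsf, ⟨i, o⟩ => by
    rw [sum_ite_parent_dec_eq_some]
    simp only [decW_dec_some]
    cases o with
    | none => rw [succW_dec_none, sum_ite_parent_eq_none_decW_mul (hsf.2 i)]
    | some s => rw [succW_dec_some, sum_ite_parent_eq_some_decW_mul (hsf.2 i) s]
  | obs _ c, x, p, hsf, ⟨i, q⟩ => by
    rw [sum_ite_parent_obs_eq_some, succW_obs, ← sum_ite_parent_eq_some_decW_mul (hsf i) q]
    exact Finset.sum_congr rfl fun s _ => by rw [decW_obs]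

open Matrix

def parentMatrix (t : TFT) : Matrix (Seq t) (Seq t) ℝ :=
  of fun ρ σ => if parent t σ = some ρ then 1 else 0

theorem parentMatrix_apply (t : TFT) (ρ σ : Seq t) :
    parentMatrix t ρ σ = if parent t σ = some ρ then 1 else 0 := rfl

theorem sum_mul_parentMatrix_apply (t : TFT) (f : Seq t → ℝ) (σ : Seq t) :
    ∑ ρ, f ρ * parentMatrix t ρ σ = (parent t σ).elim 0 f := by
  cases h : parent t σ with
  | none => simp [parentMatrix_apply, h]
  | some ρ => simp [parentMatrix_apply, h]

theorem of_u_mul_one_sub_parentMatrix (t : TFT) : of (u t) * (1 - parentMatrix t) = 1 := by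
  ext τ σ
  rw [Matrix.mul_sub, Matrix.mul_one, Matrix.sub_apply, mul_apply]
  simp only [of_apply, sum_mul_parentMatrix_apply]
  cases h : parent t σ with
  | none => simp [u_of_parent_eq_none h τ, one_apply, eq_comm]
  | some ρ => simp [u_of_parent_eq_some h τ, one_apply, eq_comm]

theorem one_sub_parentMatrix_mul_diagonal_mul_transpose_apply (t : TFT) (d : Seq t → ℝ)
    (σ σ' : Seq t) :
    ((1 - parentMatrix t) * diagonal d * (1 - parentMatrix t)ᵀ : Matrix (Seq t) (Seq t) ℝ) σ σ'
      = (if σ = σ' then d σ + ∑ τ, (if parent t τ = some σ then d τ else 0) else 0)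
        - (if parent t σ' = some σ then d σ' else 0)
        - (if parent t σ = some σ' then d σ else 0) := by
  have hCC : ∀ τ, parentMatrix t σ τ * d τ * parentMatrix t σ' τ
      = if σ = σ' then (if parent t τ = some σ then d τ else 0) else 0 := by
    intro τ
    simp only [parentMatrix_apply]
    split_ifs <;> simp_all
  simp only [transpose_sub, transpose_one, Matrix.sub_mul, Matrix.mul_sub, Matrix.one_mul,
    Matrix.mul_one, Matrix.sub_apply, mul_apply (M := parentMatrix t * diagonal d), mul_diagonal,
    diagonal_mul, transpose_apply, hCC, diagonal_apply, Finset.sum_ite_irrel, Finset.sum_const_zero]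
  simp only [parentMatrix_apply]
  split_ifs <;> ring

theorem hess_eq_transpose_mul_diagonal_mul (t : TFT) {x : Seq t → ℝ} {p : ℝ}
    (hx : ∀ σ, x σ ≠ 0) (hsf : IsSF t x p) :
    hess t x = ((1 - parentMatrix t)ᵀ * diagonal x⁻¹)ᵀ * diagonal (fun σ => decW t σ * x σ)
      * ((1 - parentMatrix t)ᵀ * diagonal x⁻¹) := by
  ext σ σ'
  have hentry : (((1 - parentMatrix t)ᵀ * diagonal x⁻¹)ᵀ * diagonal (fun σ => decW t σ * x σ)
      * ((1 - parentMatrix t)ᵀ * diagonal x⁻¹) : Matrix (Seq t) (Seq t) ℝ) σ σ'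
      = (x σ)⁻¹ * ((1 - parentMatrix t) * diagonal (fun σ => decW t σ * x σ)
          * (1 - parentMatrix t)ᵀ : Matrix (Seq t) (Seq t) ℝ) σ σ' * (x σ')⁻¹ := by
    simp only [transpose_mul, diagonal_transpose, transpose_transpose, ← Matrix.mul_assoc,
      mul_diagonal]
    rw [Matrix.mul_assoc (diagonal x⁻¹), Matrix.mul_assoc (diagonal x⁻¹), diagonal_mul,
      Pi.inv_apply, Pi.inv_apply]
  rw [hentry, one_sub_parentMatrix_mul_diagonal_mul_transpose_apply,
    sum_ite_parent_eq_some_decW_mul hsf σ, hess]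
  rcases eq_or_ne σ' σ with rfl | hne
  · simp only [if_true, if_neg (parent_ne_self σ'), sub_zero]
    field_simp
  · by_cases h1 : parent t σ' = some σ
    · have h2 : parent t σ ≠ some σ' := parent_ne_of_parent_eq h1
      simp only [if_neg hne, if_neg hne.symm, if_pos h1, if_neg h2]
      field_simp [hx σ, hx σ']
      ring
    · by_cases h2 : parent t σ = some σ'
      · simp only [if_neg hne, if_neg hne.symm, if_neg h1, if_pos h2]
        field_simp [hx σ, hx σ']
        ring
      · simp only [if_neg hne, if_neg hne.symm, if_neg h1, if_neg h2]
        ring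

open Matrix in
/-- The squared local dual norm at a strictly positive sequence-form strategy `x`:
`‖z‖_{*,x}² = zᵀ (∇²ψ(x))⁻¹ z = Σ_{ja} (u_{ja}ᵀ (z ∘ x))² / (w_j x_{ja})`. -/
theorem dual_local_norm_sq_eq (t : TFT) (x : Seq t → ℝ)
    (hpos : ∀ σ, 0 < x σ) (hsf : IsSF t x 1) (z : Seq t → ℝ) :
    z ⬝ᵥ (hess t x)⁻¹.mulVec z
      = ∑ σ : Seq t, (u t σ ⬝ᵥ fun σ' => z σ' * x σ') ^ 2 / (decW t σ * x σ) := by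
  have hx (σ : Seq t) : x σ ≠ 0 := (hpos σ).ne'
  have hKR : (1 - parentMatrix t)ᵀ * diagonal x⁻¹ * (diagonal x * (of (u t))ᵀ) = 1 := by
    rw [Matrix.mul_assoc, ← Matrix.mul_assoc (diagonal x⁻¹),
      mul_eq_one_comm.mp (diagonal_mul_diagonal_inv hx), Matrix.one_mul, ← transpose_mul,
      of_u_mul_one_sub_parentMatrix, transpose_one]
  rw [hess_eq_transpose_mul_diagonal_mul t hx hsf,
    dotProduct_inv_transpose_mul_diagonal_mul_mulVec hKR
      (fun σ => (mul_pos (decW_pos t σ) (hpos σ)).ne')]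
  refine Finset.sum_congr rfl fun σ _ => ?_
  have hxz : diagonal x *ᵥ z = fun σ' => z σ' * x σ' :=
    funext fun σ' => by rw [mulVec_diagonal, mul_comm]
  rw [transpose_mul, diagonal_transpose, transpose_transpose, ← mulVec_mulVec, hxz]
  rfl

end TFT
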